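/- Parent-based precomputation of failure data: let v = u ++ [c] be a node on the trie with parent u. If v ∈ V then f(v) = some ε (the root) and F(v) = [v]. If v ∉ V, then f(v) = h(f*(u), c) and F(v) = F(u) ++ H*(f(u), c), where h and H applied to a 'none' node yield none and [] respectively. -/

import Mathlib

variable {α : Type*} [DecidableEq α]

/-- The longest nonempty prefix of `w` that belongs to `V` (or `[]` if none exists). -/
def maxPref (V : Finset (List α)) (w : List α) : List α :=
  ((w.inits.filter (fun p => decide (p ∈ V ∧ p ≠ []))).getLast?).getD []

/-- The suffix `q_w` of `w` obtained by removing the prefix `p_w`. -/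
def restSuffix (V : Finset (List α)) (w : List α) : List α :=
  w.drop (maxPref V w).length

/-- MaxMatch tokenization; `none` encodes the failure output `[UNK]`. -/
def maxMatch (V : Finset (List α)) (w : List α) : Option (List (List α)) :=
  if hw : w = [] then some []
  else if hp : maxPref V w = [] then none
  else
    match maxMatch V (w.drop (maxPref V w).length) with
    | none => none
    | some ts => some (maxPref V w :: ts)
  termination_by w.length
  decreasing_by
    simp only [List.length_drop]
    have h1 : 0 < (maxPref V w).length := List.length_pos_iff.mpr hp
    have h2 : 0 < w.length := List.length_pos_iff.mpr hw
    omega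

/-- `w` is "on the trie" built from `V`: it is `ε` or a prefix of a vocabulary token. -/
def OnTrie (V : Finset (List α)) (w : List α) : Prop :=
  w = [] ∨ ∃ t ∈ V, w <+: t

instance (V : Finset (List α)) (w : List α) : Decidable (OnTrie V w) := by
  unfold OnTrie; infer_instance

/-- MinPop matching: `(g w, G w)`. -/
def minPop (V : Finset (List α)) (w : List α) : Option (List α) × List (List α) :=
  if hT : OnTrie V w then (some w, [])
  else if hp : maxPref V w = [] then (none, [])
  else
    let r := minPop V (w.drop (maxPref V w).length)
    (r.1, maxPref V w :: r.2)
  termination_by w.length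
  decreasing_by
    simp only [List.length_drop]
    have hw : w ≠ [] := fun h => hT (Or.inl h)
    have h1 : 0 < (maxPref V w).length := List.length_pos_iff.mpr hp
    have h2 : 0 < w.length := List.length_pos_iff.mpr hw
    omega

/-- Failure link `f(u)`. -/
def fLink (V : Finset (List α)) (u : List α) : Option (List α) :=
  if maxPref V u = [] then none else (minPop V (restSuffix V u)).1

/-- Failure pops `F(u)`. -/
def fPops (V : Finset (List α)) (u : List α) : List (List α) :=
  if maxPref V u = [] then [] else maxPref V u :: (minPop V (restSuffix V u)).2

/-- `h` extended to the `none` node: `h(none, c) = none`. -/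
def hOpt (V : Finset (List α)) : Option (List α) → α → Option (List α)
  | none, _ => none
  | some u, c => (minPop V (u ++ [c])).1

/-- `H` extended to the `none` node: `H(none, c) = []`. -/
def HOpt (V : Finset (List α)) : Option (List α) → α → List (List α)
  | none, _ => []
  | some u, c => (minPop V (u ++ [c])).2

/-! MinPop is compatible with appending a character: off the trie, `w ++ [c]` stays off the trie
and has the same longest vocabulary prefix as `w` (it is not itself a token), so `minPop` of
`w ++ [c]` retraces the pops of `w` and then runs one step `(h, H)` from the node `g w`.
The failure data of `u ++ [c]` is the MinPop data of `q_u ++ [c] = q_{u ++ [c]}`, preceded by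
the pop `p_u`; when `u ++ [c]` is itself a token, it is popped whole and the root remains. -/

omit [DecidableEq α] in
theorem OnTrie.of_prefix {V : Finset (List α)} {v w : List α} (hv : OnTrie V v) (hwv : w <+: v) :
    OnTrie V w := by
  rcases hv with rfl | ⟨t, ht, hvt⟩
  · exact Or.inl (List.prefix_nil.mp hwv)
  · exact Or.inr ⟨t, ht, hwv.trans hvt⟩

omit [DecidableEq α] in
theorem OnTrie.of_mem {V : Finset (List α)} {t : List α} (ht : t ∈ V) : OnTrie V t :=
  Or.inr ⟨t, ht, List.prefix_refl t⟩

theorem maxPref_prefix (V : Finset (List α)) (w : List α) : maxPref V w <+: w := by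
  unfold maxPref
  cases h : (w.inits.filter (fun p => decide (p ∈ V ∧ p ≠ []))).getLast? with
  | none => exact List.nil_prefix
  | some p =>
    have hp := List.mem_of_getLast? h
    simpa using ((List.mem_inits _ _).mp (List.mem_filter.mp hp).1)

section maxPref

variable {V : Finset (List α)} {w : List α} {c : α}

theorem maxPref_append_singleton_of_mem (h : w ++ [c] ∈ V) : maxPref V (w ++ [c]) = w ++ [c] := by
  simp [maxPref, List.inits_append, List.filter_append, h]

theorem maxPref_append_singleton_of_not_mem (h : w ++ [c] ∉ V) :
    maxPref V (w ++ [c]) = maxPref V w := by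
  simp [maxPref, List.inits_append, List.filter_append, h]

theorem restSuffix_append_singleton_of_mem (h : w ++ [c] ∈ V) : restSuffix V (w ++ [c]) = [] := by
  simp [restSuffix, maxPref_append_singleton_of_mem h]

theorem restSuffix_append_singleton_of_not_mem (h : w ++ [c] ∉ V) :
    restSuffix V (w ++ [c]) = restSuffix V w ++ [c] := by
  rw [restSuffix, maxPref_append_singleton_of_not_mem h]
  exact List.drop_append_of_le_length (maxPref_prefix V w).length_le

end maxPref

section minPop

variable {V : Finset (List α)} {w : List α}

theorem minPop_of_onTrie (h : OnTrie V w) : minPop V w = (some w, []) := by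
  rw [minPop]; simp [h]

theorem minPop_of_maxPref_eq_nil (hT : ¬OnTrie V w) (hp : maxPref V w = []) :
    minPop V w = (none, []) := by
  rw [minPop]; simp [hT, hp]

theorem minPop_of_maxPref_ne_nil (hT : ¬OnTrie V w) (hp : maxPref V w ≠ []) :
    minPop V w = ((minPop V (restSuffix V w)).1, maxPref V w :: (minPop V (restSuffix V w)).2) := by
  rw [minPop]; simp [hT, hp, restSuffix]

end minPop

theorem minPop_append_singleton (V : Finset (List α)) (w : List α) (c : α) :
    minPop V (w ++ [c]) = (hOpt V (minPop V w).1 c, (minPop V w).2 ++ HOpt V (minPop V w).1 c) := by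
  induction w using minPop.induct V with
  | case1 w hT => simp [minPop_of_onTrie hT, hOpt, HOpt]
  | case2 w hT hp =>
    have hTc : ¬OnTrie V (w ++ [c]) := mt (·.of_prefix (w.prefix_append [c])) hT
    have hmp := maxPref_append_singleton_of_not_mem (mt OnTrie.of_mem hTc)
    simp [minPop_of_maxPref_eq_nil hT hp, minPop_of_maxPref_eq_nil hTc (hmp ▸ hp), hOpt, HOpt]
  | case3 w hT hp ih =>
    have hTc : ¬OnTrie V (w ++ [c]) := mt (·.of_prefix (w.prefix_append [c])) hT
    have hnv : w ++ [c] ∉ V := mt OnTrie.of_mem hTc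
    rw [minPop_of_maxPref_ne_nil hTc (maxPref_append_singleton_of_not_mem hnv ▸ hp),
      minPop_of_maxPref_ne_nil hT hp, restSuffix_append_singleton_of_not_mem hnv,
      maxPref_append_singleton_of_not_mem hnv, restSuffix, ih]
    simp

section failure

variable {V : Finset (List α)} {w : List α} {c : α}

theorem fLink_append_singleton_of_mem (h : w ++ [c] ∈ V) : fLink V (w ++ [c]) = some [] := by
  simp [fLink, maxPref_append_singleton_of_mem h, restSuffix_append_singleton_of_mem h,
    minPop_of_onTrie (Or.inl rfl : OnTrie V [])]

theorem fPops_append_singleton_of_mem (h : w ++ [c] ∈ V) : fPops V (w ++ [c]) = [w ++ [c]] := by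
  simp [fPops, maxPref_append_singleton_of_mem h, restSuffix_append_singleton_of_mem h,
    minPop_of_onTrie (Or.inl rfl : OnTrie V [])]

theorem fLink_append_singleton_of_not_mem (h : w ++ [c] ∉ V) :
    fLink V (w ++ [c]) = hOpt V (fLink V w) c := by
  by_cases hp : maxPref V w = []
  · simp [fLink, maxPref_append_singleton_of_not_mem h, hp, hOpt]
  · simp [fLink, maxPref_append_singleton_of_not_mem h, hp,
      restSuffix_append_singleton_of_not_mem h, minPop_append_singleton]

theorem fPops_append_singleton_of_not_mem (h : w ++ [c] ∉ V) :
    fPops V (w ++ [c]) = fPops V w ++ HOpt V (fLink V w) c := by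
  by_cases hp : maxPref V w = []
  · simp [fPops, fLink, maxPref_append_singleton_of_not_mem h, hp, HOpt]
  · simp [fPops, fLink, maxPref_append_singleton_of_not_mem h, hp,
      restSuffix_append_singleton_of_not_mem h, minPop_append_singleton]

end failure

theorem stmt12_general (V : Finset (List α))
    (u : List α) (c : α) :
    (u ++ [c] ∈ V →
      fLink V (u ++ [c]) = some [] ∧ fPops V (u ++ [c]) = [u ++ [c]]) ∧
    (u ++ [c] ∉ V →
      fLink V (u ++ [c]) = hOpt V (fLink V u) c ∧
      fPops V (u ++ [c]) = fPops V u ++ HOpt V (fLink V u) c) :=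
  ⟨fun h => ⟨fLink_append_singleton_of_mem h, fPops_append_singleton_of_mem h⟩,
    fun h => ⟨fLink_append_singleton_of_not_mem h, fPops_append_singleton_of_not_mem h⟩⟩

/-- parent-based precomputation of the failure data for a node
`v = u ++ [c]` on the trie: if `v ∈ V` then `f(v) = some ε` and `F(v) = [v]`;
if `v ∉ V` then `f(v) = h(f(u), c)` and `F(v) = F(u) ++ H(f(u), c)`. -/
theorem stmt12 (V : Finset (List α)) (hV : ∀ t ∈ V, t ≠ [])
    (u : List α) (c : α) (hT : OnTrie V (u ++ [c])) :
    (u ++ [c] ∈ V →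
      fLink V (u ++ [c]) = some [] ∧ fPops V (u ++ [c]) = [u ++ [c]]) ∧
    (u ++ [c] ∉ V →
      fLink V (u ++ [c]) = hOpt V (fLink V u) c ∧
      fPops V (u ++ [c]) = fPops V u ++ HOpt V (fLink V u) c) :=
  stmt12_general V u c
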